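/- arXiv:2504.21675 — 4 statements merged into one kernel-verified Lean document; each statement's English description precedes it below -/
import Mathlib

section
/- Let G be a graph and S a tree-structured set with elimination tree T. Then for every connected component C of G - S, the set S(C) of vertices of S having a neighbor in C is a chain in the ancestor order of T (every two elements of S(C) are comparable). -/
/-- `C` is (the vertex set of) a connected component of the subgraph of `G` induced by `A`. -/
def IsCompOf {V : Type*} (G : SimpleGraph V) (A : Set V) (C : Set V) : Prop :=
  ∃ c : (G.induce A).ConnectedComponent, C = Subtype.val '' c.supp

/-- `S` is tree-structured with elimination tree given by the ancestor relation `anc`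
(transported along the bijection to the vertex set of the tree): `anc` restricted to `S`
is a partial order, ancestors of any element form a chain, there is a root (if `S ≠ ∅`),
and every path in `G` between two vertices `u, v ∈ S` contains a vertex `w ∈ S` that is a
common ancestor of `u` and `v`. -/
def IsElimTree {V : Type*} (G : SimpleGraph V) (S : Set V) (anc : V → V → Prop) : Prop :=
  (∀ u ∈ S, anc u u) ∧
  (∀ u ∈ S, ∀ v ∈ S, anc u v → anc v u → u = v) ∧
  (∀ u ∈ S, ∀ v ∈ S, ∀ w ∈ S, anc u v → anc v w → anc u w) ∧
  (∀ u ∈ S, ∀ v ∈ S, ∀ w ∈ S, anc u w → anc v w → anc u v ∨ anc v u) ∧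
  (S.Nonempty → ∃ r ∈ S, ∀ u ∈ S, anc r u) ∧
  (∀ u ∈ S, ∀ v ∈ S, ∀ p : G.Walk u v, ∃ w ∈ p.support, w ∈ S ∧ anc w u ∧ anc w v)

/-- The elimination tree has depth at most `k`: every element of `S` has at most `k`
ancestors (including itself). -/
def ElimDepthLE {V : Type*} (S : Set V) (anc : V → V → Prop) (k : ℕ) : Prop :=
  ∀ u ∈ S, {w ∈ S | anc w u}.ncard ≤ k

namespace SimpleGraph

variable {V : Type*} {G : SimpleGraph V}

theorem Reachable.exists_walk_support_subset {A : Set V} {x y : A}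
    (h : (G.induce A).Reachable x y) : ∃ q : G.Walk x y, ∀ w ∈ q.support, w ∈ A := by
  obtain ⟨q⟩ := h
  have hq : ∀ w ∈ (q.map (Embedding.induce A).toHom).support, w ∈ A := by
    rw [Walk.support_map]
    rintro _ hw
    obtain ⟨z, -, rfl⟩ := List.mem_map.1 hw
    exact z.2
  exact ⟨_, hq⟩

theorem exists_walk_of_adj_connectedComponent_supp {S : Set V}
    (c : (G.induce Sᶜ).ConnectedComponent)
    {u v : V} {x y : ↥(Sᶜ : Set V)} (hx : x ∈ c.supp) (hy : y ∈ c.supp)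
    (hux : G.Adj u x) (hvy : G.Adj v y) :
    ∃ p : G.Walk u v, ∀ w ∈ p.support, w ∈ S → w = u ∨ w = v := by
  rw [ConnectedComponent.mem_supp_iff] at hx hy
  obtain ⟨q, hq⟩ := (ConnectedComponent.exact (hx.trans hy.symm)).exists_walk_support_subset
  refine ⟨.cons hux (q.concat hvy.symm), fun w hw hwS => ?_⟩
  rw [Walk.support_cons, Walk.support_concat, List.mem_cons, List.mem_append,
    List.mem_singleton] at hw
  rcases hw with rfl | hw | rfl
  · exact .inl rfl
  · exact absurd hwS (hq w hw)
  · exact .inr rfl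

end SimpleGraph

theorem stmt9_general {V : Type*} (G : SimpleGraph V) (S : Set V)
    (anc : V → V → Prop) (hT : IsElimTree G S anc)
    (C : Set V) (hC : IsCompOf G Sᶜ C) :
    ∀ u ∈ S, ∀ v ∈ S, (∃ c ∈ C, G.Adj u c) → (∃ c ∈ C, G.Adj v c) →
      anc u v ∨ anc v u := by
  obtain ⟨c, rfl⟩ := hC
  rintro u hu v hv ⟨_, ⟨x, hx, rfl⟩, hux⟩ ⟨_, ⟨y, hy, rfl⟩, hvy⟩
  obtain ⟨p, hp⟩ := G.exists_walk_of_adj_connectedComponent_supp c hx hy hux hvy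
  obtain ⟨w, hwp, hwS, hwu, hwv⟩ := hT.2.2.2.2.2 u hu v hv p
  rcases hp w hwp hwS with rfl | rfl
  · exact .inl hwv
  · exact .inr hwu

/-- If `S` is tree-structured with elimination tree `anc`, then for every connected
component `C` of `G - S`, the vertices of `S` having a neighbor in `C` form a chain
in the ancestor order. -/
theorem stmt9 {V : Type*} [Fintype V] (G : SimpleGraph V) (S : Set V)
    (anc : V → V → Prop) (hT : IsElimTree G S anc)
    (C : Set V) (hC : IsCompOf G Sᶜ C) :
    ∀ u ∈ S, ∀ v ∈ S, (∃ c ∈ C, G.Adj u c) → (∃ c ∈ C, G.Adj v c) →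
      anc u v ∨ anc v u :=
  stmt9_general G S anc hT C hC
end

section
/- Let G be a graph and S a tree-structured set with elimination tree T of depth at most k. Then for every connected component C of G - S there is a subset S(C) ⊆ S of size at most k such that C is a connected component of G - S(C). -/
section

open SimpleGraph

variable {V : Type*}

theorem Set.Finite.exists_forall_rel_of_total {r : V → V → Prop} {s : Set V} (hs : s.Finite)
    (hne : s.Nonempty) (htotal : ∀ a ∈ s, ∀ b ∈ s, r a b ∨ r b a)
    (htrans : ∀ a ∈ s, ∀ b ∈ s, ∀ c ∈ s, r a b → r b c → r a c) :
    ∃ m ∈ s, ∀ a ∈ s, r a m := by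
  obtain ⟨m, hm, hmax⟩ := hs.exists_maximalFor (fun m => {a ∈ s | r a m}) s hne
  refine ⟨m, hm, fun a ha => (htotal a ha m hm).elim id fun hma => ?_⟩
  have hsub : {b ∈ s | r b m} ⊆ {b ∈ s | r b a} :=
    fun b ⟨hb, hbm⟩ => ⟨hb, htrans b hb m hm a ha hbm hma⟩
  exact (hmax ha hsub ⟨ha, (htotal a ha a ha).elim id id⟩).2

namespace IsCompOf

variable {G : SimpleGraph V} {A B C : Set V}

theorem subset (hC : IsCompOf G A C) : C ⊆ A := by
  obtain ⟨c, rfl⟩ := hC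
  rintro _ ⟨x, -, rfl⟩
  exact x.2

theorem nonempty (hC : IsCompOf G A C) : C.Nonempty := by
  obtain ⟨c, rfl⟩ := hC
  exact c.nonempty_supp.image _

theorem reachable (hC : IsCompOf G A C) {x y : V} (hx : x ∈ C) (hy : y ∈ C) :
    (G.induce A).Reachable ⟨x, hC.subset hx⟩ ⟨y, hC.subset hy⟩ := by
  obtain ⟨c, rfl⟩ := hC
  obtain ⟨x', hx', rfl⟩ := hx
  obtain ⟨y', hy', rfl⟩ := hy
  exact ConnectedComponent.exact (hx'.trans hy'.symm)

theorem exists_walk (hC : IsCompOf G A C) {x y : V} (hx : x ∈ C) (hy : y ∈ C) :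
    ∃ q : G.Walk x y, ∀ z ∈ q.support, z ∈ A := by
  obtain ⟨p⟩ := hC.reachable hx hy
  have hpA : ∀ z ∈ (p.map (Embedding.induce A).toHom).support, z ∈ A := by
    intro z hz
    rw [Walk.support_map, List.mem_map] at hz
    obtain ⟨z', -, rfl⟩ := hz
    exact z'.2
  exact ⟨_, hpA⟩

theorem mem_of_adj (hC : IsCompOf G A C) {x y : V} (hx : x ∈ C) (hy : y ∈ A) (hxy : G.Adj x y) :
    y ∈ C := by
  obtain ⟨c, rfl⟩ := hC
  obtain ⟨x', hx', rfl⟩ := hx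
  refine ⟨⟨y, hy⟩, ?_, rfl⟩
  rw [ConnectedComponent.mem_supp_iff, ← hx']
  exact ConnectedComponent.sound (Adj.reachable (G := G.induce A) (v := ⟨y, hy⟩) hxy).symm

theorem mono (hC : IsCompOf G A C) (hAB : A ⊆ B)
    (hnbr : ∀ x ∈ C, ∀ y ∈ B, G.Adj x y → y ∈ A) : IsCompOf G B C := by
  obtain ⟨x, hx⟩ := hC.nonempty
  have hwalk : ∀ {a b : B}, (G.induce B).Walk a b → a.1 ∈ C → b.1 ∈ C := by
    intro a b p
    induction p with
    | nil => exact id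
    | cons hab _ ih => exact fun ha => ih (hC.mem_of_adj ha (hnbr _ ha _ (Subtype.prop _) hab) hab)
  refine ⟨(G.induce B).connectedComponentMk ⟨x, hAB (hC.subset hx)⟩, Set.ext fun y => ⟨?_, ?_⟩⟩
  · intro hy
    refine ⟨⟨y, hAB (hC.subset hy)⟩, ?_, rfl⟩
    rw [ConnectedComponent.mem_supp_iff]
    exact ConnectedComponent.sound ((hC.reachable hx hy).map (G.induceHomOfLE hAB).toHom).symm
  · rintro ⟨z, hz, rfl⟩
    obtain ⟨p⟩ := ConnectedComponent.exact hz.symm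
    exact hwalk p hx

end IsCompOf

def neighborsIn (G : SimpleGraph V) (S C : Set V) : Set V :=
  {w ∈ S | ∃ x ∈ C, G.Adj w x}

theorem IsElimTree.total_on_neighborsIn {G : SimpleGraph V} {S C : Set V} {anc : V → V → Prop}
    (hT : IsElimTree G S anc) (hC : IsCompOf G Sᶜ C) :
    ∀ u ∈ neighborsIn G S C, ∀ v ∈ neighborsIn G S C, anc u v ∨ anc v u := by
  rintro u ⟨hu, x, hx, hux⟩ v ⟨hv, y, hy, hvy⟩
  obtain ⟨q, hqA⟩ := hC.exists_walk hx hy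
  obtain ⟨w, hwq, hwS, hwu, hwv⟩ := hT.2.2.2.2.2 u hu v hv (.cons hux (q.concat hvy.symm))
  have hw : w = u ∨ w = v := by
    simp only [Walk.support_cons, Walk.support_concat, List.mem_cons, List.mem_append,
      List.not_mem_nil, or_false] at hwq
    rcases hwq with hwu | hwq | hwv
    exacts [Or.inl hwu, (hqA w hwq hwS).elim, Or.inr hwv]
  rcases hw with rfl | rfl
  exacts [Or.inl hwv, Or.inr hwu]

theorem ElimDepthLE.ncard_le_of_total {S S₀ : Set V} {anc : V → V → Prop} {k : ℕ}
    (hdepth : ElimDepthLE S anc k) (hS : S.Finite)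
    (htrans : ∀ u ∈ S, ∀ v ∈ S, ∀ w ∈ S, anc u v → anc v w → anc u w) (hS₀ : S₀ ⊆ S)
    (htotal : ∀ u ∈ S₀, ∀ v ∈ S₀, anc u v ∨ anc v u) : S₀.ncard ≤ k := by
  rcases S₀.eq_empty_or_nonempty with rfl | hne
  · simp
  obtain ⟨m, hm, hmax⟩ := (hS.subset hS₀).exists_forall_rel_of_total hne htotal
    fun a ha b hb c hc => htrans a (hS₀ ha) b (hS₀ hb) c (hS₀ hc)
  calc S₀.ncard ≤ {w ∈ S | anc w m}.ncard :=
        Set.ncard_le_ncard (fun w hw => ⟨hS₀ hw, hmax w hw⟩) (hS.subset (Set.sep_subset _ _))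
    _ ≤ k := hdepth m (hS₀ hm)

end

/-- If `S` is tree-structured with an elimination tree of depth at most `k`, then for every
connected component `C` of `G - S` there is a subset `S₀ ⊆ S` of size at most `k`
such that `C` is a connected component of `G - S₀`. -/
theorem stmt10 {V : Type*} [Fintype V] (G : SimpleGraph V) (S : Set V)
    (anc : V → V → Prop) (hT : IsElimTree G S anc) (k : ℕ) (hdepth : ElimDepthLE S anc k) :
    ∀ C : Set V, IsCompOf G Sᶜ C →
      ∃ S₀ ⊆ S, S₀.ncard ≤ k ∧ IsCompOf G S₀ᶜ C := by
  intro C hC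
  have hsub : neighborsIn G S C ⊆ S := fun w hw => hw.1
  refine ⟨neighborsIn G S C, hsub,
    hdepth.ncard_le_of_total S.toFinite hT.2.2.1 hsub (hT.total_on_neighborsIn hC),
    hC.mono (Set.compl_subset_compl.2 hsub) ?_⟩
  intro x hx y hy hxy hyS
  exact hy ⟨hyS, x, hx, hxy.symm⟩
end

section
/- Let G be a graph and let H be obtained from G by replacing each edge by two internally disjoint paths of length 2 with the same endpoints. Then the treedepth of H equals the treedepth of G plus 1 (assuming G has at least one edge). -/
/-- The graph obtained from `G` by replacing each edge `{u,v}` by two internally disjoint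
paths of length 2 with endpoints `u` and `v`: for each edge `e` of `G` there are two new
vertices `(e, false)` and `(e, true)`, each adjacent exactly to the two endpoints of `e`;
original edges are removed. -/
def Subdiv {V : Type*} (G : SimpleGraph V) : SimpleGraph (V ⊕ (G.edgeSet × Bool)) where
  Adj x y := match x, y with
    | Sum.inl u, Sum.inr e => u ∈ (e.1 : Sym2 V)
    | Sum.inr e, Sum.inl u => u ∈ (e.1 : Sym2 V)
    | _, _ => False
  symm := ⟨by rintro (u | e) (v | f) h <;> exact h⟩
  loopless := ⟨by rintro (u | e) h <;> exact h⟩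

/-- `anc` is (the ancestor relation of) a rooted elimination forest for `G`: a partial
order in which the ancestors of every element form a chain, such that every edge of `G`
joins an ancestor-descendant pair. -/
def IsElimForest {V : Type*} (G : SimpleGraph V) (anc : V → V → Prop) : Prop :=
  (∀ u, anc u u) ∧
  (∀ u v, anc u v → anc v u → u = v) ∧
  (∀ u v w, anc u v → anc v w → anc u w) ∧
  (∀ u v w, anc u w → anc v w → anc u v ∨ anc v u) ∧
  (∀ u v, G.Adj u v → anc u v ∨ anc v u)

/-- The treedepth of `G`: the minimum, over elimination forests of `G`, of the maximum
number of vertices on a root-to-leaf path (i.e. the maximum number of ancestors of a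
vertex, the vertex itself included). -/
noncomputable def treedepth {V : Type*} (G : SimpleGraph V) : ℕ :=
  sInf {k | ∃ anc : V → V → Prop, IsElimForest G anc ∧ ∀ v : V, {u | anc u v}.ncard ≤ k}


/-!
Upper bound: in an optimal elimination forest of `G`, hang both subdivision vertices of an edge
as leaves below the lower endpoint of that edge.

Lower bound: among the elimination forests of `H = Subdiv G` of optimal depth `k`, choose one
minimising the total depth of the original vertices. If the endpoints `u`, `v` of an edge `e` were
incomparable, both subdivision vertices of `e` would be common ancestors of `u` and `v`, and
exchanging `u`, `v` with them would decrease the total depth. Hence every edge of `G` joins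
comparable original vertices, so the forest restricted to `V` is an elimination forest of `G`.
Every non-isolated original vertex is comparable with a subdivision vertex, which costs one level:
its original ancestors number at most `k - 1`.
-/

section

open Set Sum Function

variable {V W ι : Type*}

noncomputable def forestDepth (anc : V → V → Prop) (v : V) : ℕ :=
  {u | anc u v}.ncard

theorem treedepth_le {G : SimpleGraph V} {anc : V → V → Prop} (hF : IsElimForest G anc)
    {k : ℕ} (hk : ∀ v, forestDepth anc v ≤ k) : treedepth G ≤ k :=
  Nat.sInf_le ⟨anc, hF, hk⟩

theorem isElimForest_le [LinearOrder V] (G : SimpleGraph V) : IsElimForest G (· ≤ ·) :=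
  ⟨le_refl, fun _ _ => le_antisymm, fun _ _ _ => le_trans, fun u v _ _ _ => le_total u v,
    fun u v _ => le_total u v⟩

theorem exists_isElimForest_forestDepth_le_treedepth [Finite V] (G : SimpleGraph V) :
    ∃ anc, IsElimForest G anc ∧ ∀ v, forestDepth anc v ≤ treedepth G := by
  let := IsWellOrder.linearOrder (WellOrderingRel (α := V))
  exact Nat.sInf_mem (s := {k | ∃ anc, IsElimForest G anc ∧ ∀ v, forestDepth anc v ≤ k})
    ⟨Nat.card V, (· ≤ ·), isElimForest_le G, fun v => ncard_le_card _⟩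

theorem forestDepth_comap_le [Finite V] {anc : V → V → Prop} {f : W → V} (hf : Injective f)
    (y : W) : forestDepth (fun x y => anc (f x) (f y)) y ≤ forestDepth anc (f y) :=
  ncard_le_ncard_of_injOn f (fun _ hx => hx) hf.injOn

def forestRestrict (anc : V → V → Prop) (p : V → Prop) (u v : V) : Prop :=
  u = v ∨ anc u v ∧ p u ∧ p v

def leafExtension (anc : V → V → Prop) (bot : ι → V) : V ⊕ ι → V ⊕ ι → Prop
  | inl u, inl v => anc u v
  | inl u, inr i => anc u (bot i)
  | inr _, inl _ => False
  | inr i, inr j => i = j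

namespace IsElimForest

variable {G : SimpleGraph V} {anc : V → V → Prop} {u v w : V}

theorem refl (hF : IsElimForest G anc) (u : V) : anc u u := hF.1 u

theorem antisymm (hF : IsElimForest G anc) : anc u v → anc v u → u = v := hF.2.1 u v

theorem trans (hF : IsElimForest G anc) : anc u v → anc v w → anc u w := hF.2.2.1 u v w

theorem total_of_anc (hF : IsElimForest G anc) : anc u w → anc v w → anc u v ∨ anc v u :=
  hF.2.2.2.1 u v w

theorem adj (hF : IsElimForest G anc) : G.Adj u v → anc u v ∨ anc v u := hF.2.2.2.2 u v

theorem comparable_of_anc (hF : IsElimForest G anc) (hwu : anc w u) (huv : anc u v ∨ anc v u) :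
    anc w v ∨ anc v w :=
  huv.elim (fun h => .inl (hF.trans hwu h)) (fun h => hF.total_of_anc hwu h)

theorem anc_of_not_comparable (hF : IsElimForest G anc) (hu : anc w u ∨ anc u w)
    (hv : anc w v ∨ anc v w) (huv : ¬anc u v) (hvu : ¬anc v u) : anc w u ∧ anc w v := by
  rcases hu with hu | hu <;> rcases hv with hv | hv
  · exact ⟨hu, hv⟩
  · exact absurd (hF.trans hv hu) hvu
  · exact absurd (hF.trans hu hv) huv
  · exact (hF.total_of_anc hu hv).elim (absurd · huv) (absurd · hvu)

theorem comap {H : SimpleGraph W} {f : W → V} (hF : IsElimForest G anc) (hf : Injective f)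
    (hH : ∀ x y, H.Adj x y → anc (f x) (f y) ∨ anc (f y) (f x)) :
    IsElimForest H (fun x y => anc (f x) (f y)) :=
  ⟨fun _ => hF.refl _, fun _ _ h h' => hf (hF.antisymm h h'), fun _ _ _ => hF.trans,
    fun _ _ _ => hF.total_of_anc, hH⟩

theorem forestRestrict (hF : IsElimForest G anc) (p : V → Prop)
    (hp : ∀ u v, G.Adj u v → p u ∧ p v) : IsElimForest G (forestRestrict anc p) := by
  refine ⟨fun _ => .inl rfl, ?_, ?_, ?_, fun u v huv => ?_⟩
  · rintro u v (rfl | ⟨huv, -⟩) (hvu | ⟨hvu, -⟩)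
    exacts [rfl, rfl, hvu.symm, hF.antisymm huv hvu]
  · rintro u v w (rfl | ⟨huv, hu, hv⟩) (rfl | ⟨hvw, hv', hw⟩)
    exacts [.inl rfl, .inr ⟨hvw, hv', hw⟩, .inr ⟨huv, hu, hv⟩,
      .inr ⟨hF.trans huv hvw, hu, hw⟩]
  · rintro u v w (rfl | ⟨huw, hu, hw⟩) (rfl | ⟨hvw, hv, hw'⟩)
    · exact .inl (.inl rfl)
    · exact .inr (.inr ⟨hvw, hv, hw'⟩)
    · exact .inl (.inr ⟨huw, hu, hw⟩)
    · exact (hF.total_of_anc huw hvw).imp (.inr ⟨·, hu, hv⟩) (.inr ⟨·, hv, hu⟩)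
  · obtain ⟨hu, hv⟩ := hp u v huv
    exact (hF.adj huv).imp (.inr ⟨·, hu, hv⟩) (.inr ⟨·, hv, hu⟩)

theorem leafExtension (hF : IsElimForest G anc) (bot : ι → V) {H : SimpleGraph (V ⊕ ι)}
    (hH : ∀ x y, H.Adj x y → leafExtension anc bot x y ∨ leafExtension anc bot y x) :
    IsElimForest H (leafExtension anc bot) := by
  refine ⟨?_, ?_, ?_, ?_, hH⟩
  · rintro (u | i)
    exacts [hF.refl u, rfl]
  · rintro (u | i) (v | j) h h' <;> simp only [_root_.leafExtension] at h h'
    exacts [congrArg inl (hF.antisymm h h'), congrArg inr h]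
  · rintro (u | i) (v | j) (w | l) h h' <;> simp only [_root_.leafExtension] at h h' ⊢
    exacts [hF.trans h h', hF.trans h h', h' ▸ h, h.trans h']
  · rintro (u | i) (v | j) (w | l) h h' <;> simp only [_root_.leafExtension] at h h' ⊢
    exacts [hF.total_of_anc h h', hF.total_of_anc h h', .inl (h' ▸ h), .inr (h ▸ h'),
      .inl (h.trans h'.symm)]

variable [Finite V]

theorem one_le_forestDepth (hF : IsElimForest G anc) (v : V) : 1 ≤ forestDepth anc v :=
  (ncard_pos).2 ⟨v, hF.refl v⟩

theorem forestDepth_mono (hF : IsElimForest G anc) (huv : anc u v) :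
    forestDepth anc u ≤ forestDepth anc v :=
  ncard_le_ncard fun _ hx => hF.trans hx huv

theorem forestDepth_lt (hF : IsElimForest G anc) (huv : anc u v) (hne : u ≠ v) :
    forestDepth anc u < forestDepth anc v :=
  ncard_lt_ncard <| (ssubset_iff_of_subset fun _ hx => hF.trans hx huv).2
    ⟨v, hF.refl v, fun hvu => hne (hF.antisymm huv hvu)⟩

theorem one_lt_of_adj (hF : IsElimForest G anc) (huv : G.Adj u v) {k : ℕ}
    (hk : ∀ w, forestDepth anc w ≤ k) : 1 < k := by
  rcases hF.adj huv with h | h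
  · exact (hF.one_le_forestDepth u).trans_lt <| (hF.forestDepth_lt h huv.ne).trans_le (hk v)
  · exact (hF.one_le_forestDepth v).trans_lt <| (hF.forestDepth_lt h huv.ne').trans_le (hk u)

theorem forestDepth_comap_lt (hF : IsElimForest G anc) {f : W → V} (hf : Injective f) {m : V}
    (hm : m ∉ range f) {y : W} (hmy : anc m (f y) ∨ anc (f y) m) {k : ℕ}
    (hk : ∀ v, forestDepth anc v ≤ k) : forestDepth (fun x y => anc (f x) (f y)) y < k := by
  rcases hmy with hmy | hym
  · have hsub : f '' {x | anc (f x) (f y)} ⊆ {u | anc u (f y)} \ {m} := by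
      rintro _ ⟨x, hx, rfl⟩
      exact ⟨hx, fun h => hm ⟨x, h⟩⟩
    have hle := ncard_le_ncard hsub
    rw [ncard_image_of_injective _ hf,
      ncard_sdiff_singleton_of_mem (s := {u | anc u (f y)}) hmy] at hle
    have := hF.one_le_forestDepth (f y)
    have := hk (f y)
    unfold forestDepth at *
    change {x | anc (f x) (f y)}.ncard < k
    omega
  · calc forestDepth (fun x y => anc (f x) (f y)) y ≤ forestDepth anc (f y) :=
          forestDepth_comap_le hf y
      _ < forestDepth anc m := hF.forestDepth_lt hym fun h => hm ⟨y, h⟩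
      _ ≤ k := hk m

theorem forestDepth_forestRestrict_le (hF : IsElimForest G anc) (p : V → Prop) (v : V) :
    forestDepth (_root_.forestRestrict anc p) v ≤ forestDepth anc v :=
  ncard_le_ncard fun _ => Or.rec (· ▸ hF.refl v) And.left

end IsElimForest

theorem forestDepth_forestRestrict_of_not {anc : V → V → Prop} {p : V → Prop} {v : V}
    (hv : ¬p v) : forestDepth (forestRestrict anc p) v = 1 := by
  have : {u | forestRestrict anc p u v} = {v} := by
    ext u
    simp [forestRestrict, hv]
  rw [forestDepth, this, ncard_singleton]

theorem forestDepth_leafExtension_inl (anc : V → V → Prop) (bot : ι → V) (v : V) :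
    forestDepth (leafExtension anc bot) (inl v) = forestDepth anc v := by
  have : {x | leafExtension anc bot x (inl v)} = inl '' {u | anc u v} := by
    ext (u | i) <;> simp [leafExtension]
  rw [forestDepth, this, ncard_image_of_injective _ inl_injective, forestDepth]

theorem forestDepth_leafExtension_inr [Finite V] (anc : V → V → Prop) (bot : ι → V)
    (i : ι) : forestDepth (leafExtension anc bot) (inr i) ≤ forestDepth anc (bot i) + 1 := by
  have : {x | leafExtension anc bot x (inr i)} ⊆ insert (inr i) (inl '' {u | anc u (bot i)}) := by
    rintro (u | j) h <;> simp_all [leafExtension]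
  refine (ncard_le_ncard this).trans ((ncard_insert_le _ _).trans ?_)
  rw [ncard_image_of_injective _ inl_injective, forestDepth]

section Subdiv

variable {G : SimpleGraph V}

@[simp]
theorem subdiv_adj_inl_inr {a : V} {q : G.edgeSet × Bool} :
    (Subdiv G).Adj (inl a) (inr q) ↔ a ∈ (q.1 : Sym2 V) :=
  Iff.rfl

@[simp]
theorem subdiv_adj_inr_inl {a : V} {q : G.edgeSet × Bool} :
    (Subdiv G).Adj (inr q) (inl a) ↔ a ∈ (q.1 : Sym2 V) :=
  Iff.rfl

theorem treedepth_subdiv_le [Finite V] : treedepth (Subdiv G) ≤ treedepth G + 1 := by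
  obtain ⟨anc, hF, hk⟩ := exists_isElimForest_forestDepth_le_treedepth G
  have hbot : ∀ e : G.edgeSet, ∃ w, ∀ z ∈ (e : Sym2 V), anc z w := by
    rintro ⟨e, he⟩
    induction e using Sym2.ind with
    | _ a b =>
      rcases hF.adj (G.mem_edgeSet.mp he) with h | h
      · exact ⟨b, by simp [h, hF.refl]⟩
      · exact ⟨a, by simp [h, hF.refl]⟩
  choose bot hbot using hbot
  refine treedepth_le (hF.leafExtension (fun q => bot q.1) ?_) ?_
  · rintro (a | p) (b | q) hadj
    exacts [False.elim hadj, .inl (hbot _ _ hadj), .inr (hbot _ _ hadj), False.elim hadj]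
  · rintro (v | q)
    · rw [forestDepth_leafExtension_inl]
      exact (hk v).trans (Nat.le_succ _)
    · exact (forestDepth_leafExtension_inr _ _ q).trans (Nat.add_le_add_right (hk _) 1)

variable {anc : (V ⊕ G.edgeSet × Bool) → (V ⊕ G.edgeSet × Bool) → Prop}

theorem exists_perm_isElimForest_subdiv (hF : IsElimForest (Subdiv G) anc) {u v : V}
    (huv : G.Adj u v) (hu : ¬anc (inl u) (inl v)) (hv : ¬anc (inl v) (inl u)) :
    ∃ σ : Equiv.Perm (V ⊕ G.edgeSet × Bool),
      IsElimForest (Subdiv G) (fun x y => anc (σ x) (σ y)) ∧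
      (∀ w, anc (σ (inl w)) (inl w)) ∧ σ (inl u) ≠ inl u := by
  classical
  let e : G.edgeSet := ⟨s(u, v), huv⟩
  have hmid : ∀ b, anc (inr (e, b)) (inl u) ∧ anc (inr (e, b)) (inl v) := fun b =>
    hF.anc_of_not_comparable (hF.adj (by simp [e])) (hF.adj (by simp [e])) hu hv
  let σ := (Equiv.swap (inl u) (inr (e, true))).trans (Equiv.swap (inl v) (inr (e, false)))
  have hσu : σ (inl u) = inr (e, true) := by simp [σ, Equiv.swap_apply_def]
  have hσv : σ (inl v) = inr (e, false) := by simp [σ, Equiv.swap_apply_def, huv.ne']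
  have hσe : ∀ b, σ (inr (e, b)) = inl (if b then u else v) := by
    rintro (_ | _) <;> simp [σ, Equiv.swap_apply_def, huv.ne]
  have hσ_inl : ∀ w, w ≠ u → w ≠ v → σ (inl w) = inl w := by
    intro w hwu hwv
    simp [σ, Equiv.swap_apply_def, hwu, hwv]
  have hσ_inr : ∀ q : G.edgeSet × Bool, q.1 ≠ e → σ (inr q) = inr q := by
    rintro ⟨f, b⟩ hf
    simp_all [σ, Equiv.swap_apply_def]
  have hσ_le : ∀ w, anc (σ (inl w)) (inl w) := by
    intro w
    by_cases hwu : w = u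
    · rw [hwu, hσu]
      exact (hmid true).1
    by_cases hwv : w = v
    · rw [hwv, hσv]
      exact (hmid false).2
    rw [hσ_inl w hwu hwv]
    exact hF.refl _
  have hσ_adj : ∀ a (q : G.edgeSet × Bool), a ∈ (q.1 : Sym2 V) →
      anc (σ (inl a)) (σ (inr q)) ∨ anc (σ (inr q)) (σ (inl a)) := by
    rintro a ⟨f, b⟩ ha
    by_cases hf : f = e
    · subst hf
      have ha' : a = u ∨ a = v := by simpa [e] using ha
      left
      rcases ha' with rfl | rfl <;> cases b <;> simp [hσu, hσv, hσe, hmid]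
    · rw [hσ_inr _ hf]
      exact hF.comparable_of_anc (hσ_le a) (hF.adj ha)
  refine ⟨σ, hF.comap σ.injective ?_, hσ_le, by simp [hσu]⟩
  rintro (a | p) (b | q) hadj
  exacts [False.elim hadj, hσ_adj a q hadj, (hσ_adj b p hadj).symm, False.elim hadj]

theorem exists_isElimForest_subdiv_comparable [Fintype V] (hF : IsElimForest (Subdiv G) anc)
    {k : ℕ} (hk : ∀ x, forestDepth anc x ≤ k) :
    ∃ anc' : (V ⊕ G.edgeSet × Bool) → (V ⊕ G.edgeSet × Bool) → Prop,
      IsElimForest (Subdiv G) anc' ∧ (∀ x, forestDepth anc' x ≤ k) ∧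
      ∀ u v, G.Adj u v → anc' (inl u) (inl v) ∨ anc' (inl v) (inl u) := by
  let Φ : ((V ⊕ G.edgeSet × Bool) → (V ⊕ G.edgeSet × Bool) → Prop) → ℕ :=
    fun r => ∑ w, forestDepth r (inl w)
  obtain ⟨anc', ⟨hF', hk'⟩, hmin⟩ := (measure Φ).wf.has_min
    {r | IsElimForest (Subdiv G) r ∧ ∀ x, forestDepth r x ≤ k} ⟨anc, hF, hk⟩
  refine ⟨anc', hF', hk', fun u v huv => ?_⟩
  by_contra! hcomp
  obtain ⟨σ, hFσ, hσ_le, hσu⟩ := exists_perm_isElimForest_subdiv hF' huv hcomp.1 hcomp.2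
  refine hmin _ ⟨hFσ, fun x => (forestDepth_comap_le σ.injective x).trans (hk' _)⟩ ?_
  show Φ _ < Φ anc'
  refine Finset.sum_lt_sum (fun w _ => ?_) ⟨u, Finset.mem_univ u, ?_⟩
  · exact (forestDepth_comap_le σ.injective _).trans (hF'.forestDepth_mono (hσ_le w))
  · exact (forestDepth_comap_le σ.injective _).trans_lt (hF'.forestDepth_lt (hσ_le u) hσu)

theorem treedepth_add_one_le_treedepth_subdiv [Fintype V] (hE : G.edgeSet.Nonempty) :
    treedepth G + 1 ≤ treedepth (Subdiv G) := by
  obtain ⟨anc₀, hF₀, hk₀⟩ := exists_isElimForest_forestDepth_le_treedepth (Subdiv G)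
  obtain ⟨anc, hF, hk, hcomp⟩ := exists_isElimForest_subdiv_comparable hF₀ hk₀
  have hk_one : 1 < treedepth (Subdiv G) := by
    obtain ⟨e, he⟩ := hE
    induction e using Sym2.ind with
    | _ a b =>
      exact hF.one_lt_of_adj (u := inl a) (v := inr (⟨s(a, b), he⟩, false)) (by simp) hk
  have hFV := hF.comap inl_injective hcomp
  -- an isolated vertex may still have `k` original ancestors, so it is made a root
  let p : V → Prop := fun a => ∃ z, G.Adj a z
  have hFG := hFV.forestRestrict p fun u v huv => ⟨⟨v, huv⟩, ⟨u, huv.symm⟩⟩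
  refine Nat.add_le_of_le_sub hk_one.le (treedepth_le hFG fun a => ?_)
  by_cases ha : p a
  · obtain ⟨z, haz⟩ := ha
    refine (hFV.forestDepth_forestRestrict_le p a).trans ?_
    exact Nat.le_sub_one_of_lt <| hF.forestDepth_comap_lt inl_injective
      (m := inr (⟨s(a, z), haz⟩, false)) (by simp) (hF.adj (by simp)) hk
  · rw [forestDepth_forestRestrict_of_not ha]
    omega

end Subdiv

end

/-- If `G` has at least one edge and `H` is obtained from `G` by replacing each edge by two
internally disjoint paths of length 2, then the treedepth of `H` equals the treedepth of
`G` plus one. -/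
theorem stmt14 {V : Type*} [Fintype V] (G : SimpleGraph V) (hE : G.edgeSet.Nonempty) :
    treedepth (Subdiv G) = treedepth G + 1 :=
  treedepth_subdiv_le.antisymm (treedepth_add_one_le_treedepth_subdiv hE)
end

section
/- Let G be a (q,k)-unbreakable graph, let S' ⊆ V(G) with |S'| ≤ k be such that every connected component of G - S' has a dominating set of size at most d, let C'_0 be the unique connected component of G - S' with more than q vertices (if it exists), and let S be the set of vertices of S' having at least one neighbor in C'_0 and at least one neighbor outside N[C'_0]. Suppose S is nonempty and X is a dominating set of G of size at most q + d with X ∩ S = ∅. Then there exists v ∈ S that either lies in N(x) for some x ∈ X with deg(x) ≤ q, or lies in N(y) for some y ∈ N(x) with x ∈ X, deg(x) ≤ q and deg(y) ≤ q. -/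
/-- A graph `G` is `(q,k)`-unbreakable if for every separation `(A,B)` of order at most `k`,
we have `|A| ≤ q` or `|B| ≤ q`. -/
def Unbreakable {V : Type*} (G : SimpleGraph V) (q k : ℕ) : Prop :=
  ∀ A B : Set V, A ∪ B = Set.univ →
    (∀ a ∈ A \ B, ∀ b ∈ B \ A, ¬ G.Adj a b) →
    (A ∩ B).ncard ≤ k → A.ncard ≤ q ∨ B.ncard ≤ q

/-- `D ⊆ A` dominates `A`: every vertex of `A` is in `D` or adjacent to a vertex of `D`. -/
def IsDomSetOn {V : Type*} (G : SimpleGraph V) (A D : Set V) : Prop :=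
  D ⊆ A ∧ ∀ v ∈ A, v ∈ D ∨ ∃ u ∈ D, G.Adj u v

/-- The closed neighborhood `N[Y]` of a set `Y`. -/
def closedNbhd {V : Type*} (G : SimpleGraph V) (Y : Set V) : Set V :=
  Y ∪ {w | ∃ c ∈ Y, G.Adj c w}

/-- Let `G` be a `(q,k)`-unbreakable graph (with more than `2q+1` vertices), let
`S' ⊆ V(G)` with `|S'| ≤ k` be such that every connected component of `G - S'` has a
dominating set of size at most `d`, let `C₀'` be the unique connected component of
`G - S'` with more than `q` vertices, and let `S` be the set of vertices of `S'` having at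
least one neighbor in `C₀'` and at least one neighbor outside `N[C₀']`. Suppose `S` is
nonempty and `X` is a dominating set of `G` of size at most `q + d` with `X ∩ S = ∅`.
Then there is a `v ∈ S` that lies in `N(x)` for some `x ∈ X` with `deg(x) ≤ q`, or lies
in `N(y)` for some `y ∈ N(x)` with `x ∈ X`, `deg(x) ≤ q` and `deg(y) ≤ q`. -/
theorem stmt19 {V : Type*} [Fintype V] (G : SimpleGraph V) [DecidableRel G.Adj]
    (q k d : ℕ) (hG : Unbreakable G q k) (hcard : 2 * q + 1 < Fintype.card V)
    (S' : Set V) (hS'card : S'.ncard ≤ k)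
    (hdom : ∀ C : Set V, IsCompOf G S'ᶜ C → ∃ D : Set V, IsDomSetOn G C D ∧ D.ncard ≤ d)
    (C₀' : Set V) (hC₀' : IsCompOf G S'ᶜ C₀') (hbig : q < C₀'.ncard)
    (S : Set V)
    (hS : S = {v ∈ S' | (∃ c ∈ C₀', G.Adj v c) ∧ ∃ w : V, w ∉ closedNbhd G C₀' ∧ G.Adj v w})
    (hSne : S.Nonempty)
    (X : Set V) (hX : IsDomSetOn G Set.univ X) (hXcard : X.ncard ≤ q + d)
    (hXS : X ∩ S = ∅) :
    ∃ v ∈ S,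
      (∃ x ∈ X, G.degree x ≤ q ∧ G.Adj x v) ∨
      (∃ x ∈ X, ∃ y : V, G.Adj x y ∧ G.degree x ≤ q ∧ G.degree y ≤ q ∧ G.Adj y v) := by
  classical
  -- C₀' avoids S'
  have hsub : ∀ a ∈ C₀', a ∉ S' := by
    obtain ⟨c, rfl⟩ := hC₀'
    rintro a ⟨⟨a, ha⟩, _, rfl⟩
    exact ha
  -- C₀' is closed under adjacency within S'ᶜ
  have hclosed : ∀ a ∈ C₀', ∀ b, b ∉ S' → G.Adj a b → b ∈ C₀' := by
    obtain ⟨c, rfl⟩ := hC₀'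
    rintro a ⟨⟨a, ha⟩, hmem, rfl⟩ b hb hadj
    refine ⟨⟨b, hb⟩, ?_, rfl⟩
    rw [SimpleGraph.ConnectedComponent.mem_supp_iff] at hmem ⊢
    rw [← hmem]
    exact SimpleGraph.ConnectedComponent.sound
      (SimpleGraph.Adj.reachable (show (G.induce S'ᶜ).Adj ⟨b, hb⟩ ⟨a, ha⟩ from hadj.symm))
  -- The complement of C₀' has at most q vertices
  have hA : (C₀'ᶜ).ncard ≤ q := by
    have h := hG (C₀' ∪ S') C₀'ᶜ ?_ ?_ ?_
    · rcases h with h | h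
      · exact absurd (le_trans (Set.ncard_le_ncard Set.subset_union_left (Set.toFinite _)) h)
          (not_le.mpr hbig)
      · exact h
    · apply Set.eq_univ_iff_forall.mpr
      intro v
      rcases em (v ∈ C₀') with hv | hv
      · exact Or.inl (Or.inl hv)
      · exact Or.inr hv
    · rintro a ⟨haA, haB⟩ b ⟨hbB, hbA⟩ hab
      have ha : a ∈ C₀' := not_not.mp haB
      have hb1 : b ∉ C₀' := fun h => hbA (Or.inl h)
      have hb2 : b ∉ S' := fun h => hbA (Or.inr h)
      exact hb1 (hclosed a ha b hb2 hab)
    · refine le_trans (le_trans (Set.ncard_le_ncard ?_ (Set.toFinite _)) le_rfl) hS'card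
      rintro v ⟨hv1, hv2⟩
      rcases hv1 with hv1 | hv1
      · exact absurd hv1 hv2
      · exact hv1
  -- Vertices outside C₀' with no neighbor in C₀' have degree ≤ q
  have hdeg : ∀ u, u ∉ C₀' → (∀ c ∈ C₀', ¬ G.Adj u c) → G.degree u ≤ q := by
    intro u hu hnc
    have h1 : G.neighborSet u ⊆ C₀'ᶜ := fun w hw hwc => hnc w hwc hw
    have h2 : G.degree u = (G.neighborSet u).ncard := by
      rw [Set.ncard_eq_toFinset_card']
      simp [SimpleGraph.degree, SimpleGraph.neighborFinset]
    rw [h2]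
    exact le_trans (Set.ncard_le_ncard h1 (Set.toFinite _)) hA
  obtain ⟨v, hv⟩ := hSne
  have hv' := hv
  rw [hS] at hv'
  obtain ⟨hvS', ⟨c, hc, hvc⟩, w, hw, hvw⟩ := hv'
  -- properties of w
  have hwC : w ∉ C₀' := fun h => hw (Or.inl h)
  have hwN : ∀ c ∈ C₀', ¬ G.Adj w c := fun c' hc' h => hw (Or.inr ⟨c', hc', h.symm⟩)
  have hdegw : G.degree w ≤ q := hdeg w hwC hwN
  refine ⟨v, hv, ?_⟩
  rcases hX.2 w (Set.mem_univ w) with hwX | ⟨x, hxX, hxw⟩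
  · exact Or.inl ⟨w, hwX, hdegw, hvw.symm⟩
  · have hxC : x ∉ C₀' := fun h => hw (Or.inr ⟨x, h, hxw⟩)
    have hxN : ∀ c ∈ C₀', ¬ G.Adj x c := by
      intro c' hc' hadj
      have hxS' : x ∈ S' := by
        by_contra hxS'
        exact hxC (hclosed c' hc' x hxS' hadj.symm)
      have : x ∈ S := by
        rw [hS]
        exact ⟨hxS', ⟨c', hc', hadj⟩, w, hw, hxw⟩
      exact absurd (Set.mem_inter hxX this) (by rw [hXS]; exact fun h => h)
    have hdegx : G.degree x ≤ q := hdeg x hxC hxN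
    exact Or.inr ⟨x, hxX, w, hxw, hdegx, hdegw, hvw.symm⟩
end
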